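/- (Lemma 2.6, strict case.) Let F be a symmetric bilinear form on V such that F(v,v) > 0 for every nonzero v ∈ C0 (i.e. for every v ≠ 0 with J(v) = 0). Then r− := sup{ F(u,u)/J(u) : u ∈ V, J(u) < 0 } is strictly less than r+ := inf{ F(v,v)/J(v) : v ∈ V, J(v) > 0 }, and for every real number r with r− < r < r+ one has F(v,v) > r·J(v) for every nonzero v ∈ V. -/

import Mathlib

/-!
Write `J(w) = B(w,w)`. If `J(u) < 0 < J(v)` and `c = F(v,v)/J(v)`, then `G = F - c • B` vanishes
at `v` and is positive on the nonzero null vectors of `B`. The line `u + t v` crosses the null cone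
on both sides of `t = 0`, and `G` is affine along it, so `G(u,u) > 0`, i.e.
`F(u,u)/J(u) < F(v,v)/J(v)`. The supremum over `J < 0` and the infimum over `J > 0` are attained:
normalize a maximizing sequence to the unit sphere of some norm; its limit `z` has `J(z) ≤ 0`
and `F(z,z) = r₋ J(z)`, which excludes `J(z) = 0` because `F` is positive there. Hence `r₋ < r₊`,
and the final claim follows by splitting on the sign of `J(v)`.
-/

open Filter

section Algebraic

variable {V : Type*} [AddCommGroup V] [Module ℝ V]

theorem LinearMap.apply_add_smul_self (G : V →ₗ[ℝ] V →ₗ[ℝ] ℝ) (u v : V) (t : ℝ) :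
    G (u + t • v) (u + t • v) = G u u + t * (G u v + G v u) + t ^ 2 * G v v := by
  simp only [map_add, map_smul, LinearMap.add_apply, LinearMap.smul_apply, smul_eq_mul]
  ring

theorem LinearMap.apply_smul_self (G : V →ₗ[ℝ] V →ₗ[ℝ] ℝ) (a : ℝ) (v : V) :
    G (a • v) (a • v) = a ^ 2 * G v v := by
  simp only [map_smul, LinearMap.smul_apply, smul_eq_mul]
  ring

theorem exists_pos_quadratic_root_of_neg {a b c : ℝ} (ha : 0 < a) (hc : c < 0) :
    ∃ t, 0 < t ∧ a * t ^ 2 + b * t + c = 0 := by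
  have hdisc : 0 ≤ b ^ 2 - 4 * a * c := by nlinarith [sq_nonneg b]
  set D := Real.sqrt (b ^ 2 - 4 * a * c)
  have hD : D ^ 2 = b ^ 2 - 4 * a * c := Real.sq_sqrt hdisc
  have hbD : b < D := by
    nlinarith [Real.sqrt_nonneg (b ^ 2 - 4 * a * c), sq_nonneg (b + D), mul_pos ha (neg_pos.2 hc)]
  refine ⟨(-b + D) / (2 * a), div_pos (by linarith) (by positivity), ?_⟩
  field_simp
  linear_combination hD

theorem apply_self_pos_of_isotropic_pos (B G : V →ₗ[ℝ] V →ₗ[ℝ] ℝ)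
    (hG : ∀ w, w ≠ 0 → B w w = 0 → 0 < G w w) {u v : V} (hu : B u u < 0) (hv : 0 < B v v)
    (hGv : G v v = 0) : 0 < G u u := by
  have isotropic {t : ℝ} (ht : B v v * t ^ 2 + (B u v + B v u) * t + B u u = 0) :
      u + t • v ≠ 0 ∧ B (u + t • v) (u + t • v) = 0 := by
    refine ⟨fun h => ?_, by rw [B.apply_add_smul_self]; linear_combination ht⟩
    have hu' : u = (-t) • v := by rw [neg_smul, ← sub_eq_zero, sub_neg_eq_add, h]
    have := B.apply_smul_self (-t) v
    rw [← hu'] at this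
    nlinarith [sq_nonneg t]
  obtain ⟨t₂, ht₂, hB₂⟩ := exists_pos_quadratic_root_of_neg (b := B u v + B v u) hv hu
  obtain ⟨s, hs, hB₁⟩ := exists_pos_quadratic_root_of_neg (b := -(B u v + B v u)) hv hu
  obtain ⟨hne₁, hiso₁⟩ := isotropic (t := -s) (by linear_combination hB₁)
  obtain ⟨hne₂, hiso₂⟩ := isotropic hB₂
  have hG₁ := hG _ hne₁ hiso₁
  have hG₂ := hG _ hne₂ hiso₂
  rw [G.apply_add_smul_self, hGv] at hG₁ hG₂
  nlinarith [mul_pos ht₂ hG₁, mul_pos hs hG₂]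

theorem div_lt_div_of_isotropic_pos (B F : V →ₗ[ℝ] V →ₗ[ℝ] ℝ)
    (hF : ∀ w, w ≠ 0 → B w w = 0 → 0 < F w w) {u v : V} (hu : B u u < 0) (hv : 0 < B v v) :
    F u u / B u u < F v v / B v v := by
  have key := apply_self_pos_of_isotropic_pos B (F - (F v v / B v v) • B)
    (fun w hw hBw => by simpa [hBw] using hF w hw hBw) hu hv
    (by simp [div_mul_cancel₀ _ hv.ne'])
  simp only [LinearMap.sub_apply, LinearMap.smul_apply, smul_eq_mul, sub_pos] at key
  exact (div_lt_iff_of_neg hu).2 key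

end Algebraic

section Normed

variable {E : Type*} [NormedAddCommGroup E] [NormedSpace ℝ E] [FiniteDimensional ℝ E]

theorem LinearMap.continuous_apply_self (G : E →ₗ[ℝ] E →ₗ[ℝ] ℝ) : Continuous fun w => G w w :=
  G.toContinuousBilinearMap.continuous₂.comp (continuous_id.prodMk continuous_id)

theorem exists_div_eq_sSup_of_isotropic_pos (B F : E →ₗ[ℝ] E →ₗ[ℝ] ℝ)
    (hF : ∀ w, w ≠ 0 → B w w = 0 → 0 < F w w)
    (hne : {x : ℝ | ∃ u, B u u < 0 ∧ x = F u u / B u u}.Nonempty)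
    (hbdd : BddAbove {x : ℝ | ∃ u, B u u < 0 ∧ x = F u u / B u u}) :
    ∃ u, B u u < 0 ∧ F u u / B u u = sSup {x : ℝ | ∃ u, B u u < 0 ∧ x = F u u / B u u} := by
  set c := sSup {x : ℝ | ∃ u, B u u < 0 ∧ x = F u u / B u u}
  obtain ⟨x, -, hx, hxS⟩ := exists_seq_tendsto_sSup hne hbdd
  choose u hu hxu using hxS
  set w : ℕ → E := fun k => ‖u k‖⁻¹ • u k
  have hu₀ (k : ℕ) : u k ≠ 0 := by rintro h; simpa [h] using hu k
  have hw_sphere (k : ℕ) : w k ∈ Metric.sphere (0 : E) 1 := by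
    simpa using norm_smul_inv_norm (𝕜 := ℝ) (hu₀ k)
  have hBw (k : ℕ) : B (w k) (w k) < 0 := by
    rw [B.apply_smul_self]
    exact mul_neg_of_pos_of_neg (by simp [hu₀ k]) (hu k)
  have hFw (k : ℕ) : F (w k) (w k) = x k * B (w k) (w k) := by
    rw [B.apply_smul_self, F.apply_smul_self, hxu k]
    field_simp [(hu k).ne]
  obtain ⟨z, hz, ψ, hψ, hwz⟩ := (isCompact_sphere (0 : E) 1).tendsto_subseq hw_sphere
  have hBlim := (B.continuous_apply_self.tendsto z).comp hwz
  have hFlim := (F.continuous_apply_self.tendsto z).comp hwz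
  have hBz : B z z ≤ 0 := le_of_tendsto hBlim (Eventually.of_forall fun k => (hBw (ψ k)).le)
  have hFz : F z z = c * B z z := by
    refine tendsto_nhds_unique hFlim ?_
    simpa [Function.comp_def, hFw] using (hx.comp hψ.tendsto_atTop).mul hBlim
  have hz₀ : z ≠ 0 := by rintro rfl; simp at hz
  have hBz' : B z z < 0 := hBz.lt_of_ne fun h => by simpa [hFz, h] using hF z hz₀ h
  exact ⟨z, hBz', by rw [hFz, mul_div_assoc, div_self hBz'.ne, mul_one]⟩

end Normed

section FiniteDimensional

variable {V : Type*} [AddCommGroup V] [Module ℝ V] [FiniteDimensional ℝ V]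

theorem exists_forall_div_le_of_isotropic_pos (B F : V →ₗ[ℝ] V →ₗ[ℝ] ℝ)
    (hF : ∀ w, w ≠ 0 → B w w = 0 → 0 < F w w) {u₀ v₀ : V} (hu₀ : B u₀ u₀ < 0)
    (hv₀ : 0 < B v₀ v₀) :
    ∃ u, B u u < 0 ∧ ∀ w, B w w < 0 → F w w / B w w ≤ F u u / B u u := by
  have hbdd : BddAbove {x : ℝ | ∃ u, B u u < 0 ∧ x = F u u / B u u} := by
    refine ⟨F v₀ v₀ / B v₀ v₀, ?_⟩
    rintro _ ⟨w, hw, rfl⟩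
    exact (div_lt_div_of_isotropic_pos B F hF hw hv₀).le
  -- the statement does not involve a topology, so any norm on `V` will do
  let e := (Module.finBasis ℝ V).equivFun
  let := NormedAddCommGroup.induced V _ e e.injective
  let := NormedSpace.induced ℝ V _ e
  obtain ⟨u, hu, hsup⟩ := exists_div_eq_sSup_of_isotropic_pos B F hF ⟨_, u₀, hu₀, rfl⟩ hbdd
  exact ⟨u, hu, fun w hw => hsup ▸ le_csSup hbdd ⟨w, hw, rfl⟩⟩

theorem exists_forall_le_div_of_isotropic_pos (B F : V →ₗ[ℝ] V →ₗ[ℝ] ℝ)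
    (hF : ∀ w, w ≠ 0 → B w w = 0 → 0 < F w w) {u₀ v₀ : V} (hu₀ : B u₀ u₀ < 0)
    (hv₀ : 0 < B v₀ v₀) :
    ∃ v, 0 < B v v ∧ ∀ w, 0 < B w w → F v v / B v v ≤ F w w / B w w := by
  obtain ⟨v, hv, hmin⟩ := exists_forall_div_le_of_isotropic_pos (-B) F
    (fun w hw hBw => hF w hw (neg_eq_zero.1 hBw)) (u₀ := v₀) (v₀ := u₀)
    (by simpa using hv₀) (by simpa using hu₀)
  simp only [LinearMap.neg_apply, neg_lt_zero, div_neg, neg_le_neg_iff] at hv hmin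
  exact ⟨v, hv, hmin⟩

end FiniteDimensional

theorem stmt_1_general
    {V : Type*} [AddCommGroup V] [Module ℝ V] [FiniteDimensional ℝ V]
    (B : V →ₗ[ℝ] V →ₗ[ℝ] ℝ)
    (hBindef : ∃ v w : V, 0 < B v v ∧ B w w < 0)
    (F : V →ₗ[ℝ] V →ₗ[ℝ] ℝ)
    (hF0 : ∀ v : V, v ≠ 0 → B v v = 0 → 0 < F v v) :
    sSup {x : ℝ | ∃ u : V, B u u < 0 ∧ x = F u u / B u u} <
      sInf {x : ℝ | ∃ v : V, 0 < B v v ∧ x = F v v / B v v} ∧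
    ∀ r : ℝ,
      sSup {x : ℝ | ∃ u : V, B u u < 0 ∧ x = F u u / B u u} < r →
      r < sInf {x : ℝ | ∃ v : V, 0 < B v v ∧ x = F v v / B v v} →
      ∀ v : V, v ≠ 0 → r * B v v < F v v := by
  obtain ⟨v₀, u₀, hv₀, hu₀⟩ := hBindef
  obtain ⟨u, hu, hmax⟩ := exists_forall_div_le_of_isotropic_pos B F hF0 hu₀ hv₀
  obtain ⟨v, hv, hmin⟩ := exists_forall_le_div_of_isotropic_pos B F hF0 hu₀ hv₀
  have hsup : sSup {x : ℝ | ∃ u : V, B u u < 0 ∧ x = F u u / B u u} = F u u / B u u :=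
    IsGreatest.csSup_eq ⟨⟨u, hu, rfl⟩, by rintro _ ⟨w, hw, rfl⟩; exact hmax w hw⟩
  have hinf : sInf {x : ℝ | ∃ v : V, 0 < B v v ∧ x = F v v / B v v} = F v v / B v v :=
    IsLeast.csInf_eq ⟨⟨v, hv, rfl⟩, by rintro _ ⟨w, hw, rfl⟩; exact hmin w hw⟩
  rw [hsup, hinf]
  refine ⟨div_lt_div_of_isotropic_pos B F hF0 hu hv, fun r hur hrv w hw => ?_⟩
  rcases lt_trichotomy (B w w) 0 with hw' | hw' | hw'
  · exact (div_lt_iff_of_neg hw').1 ((hmax w hw').trans_lt hur)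
  · simpa [hw'] using hF0 w hw hw'
  · exact (lt_div_iff₀ hw').1 (hrv.trans_le (hmin w hw'))

/-- Lemma 2.6 (strict case): if the symmetric bilinear form `F` is positive on the
nonzero vectors of the zero cone of the nondegenerate indefinite symmetric bilinear
form `B`, then `r₋ = sup_{J(u)<0} F(u,u)/J(u) < r₊ = inf_{J(v)>0} F(v,v)/J(v)`, and
for every `r` with `r₋ < r < r₊` one has `F(v,v) > r·J(v)` for all nonzero `v`. -/
theorem stmt_1
    {V : Type*} [AddCommGroup V] [Module ℝ V] [FiniteDimensional ℝ V]
    (B : V →ₗ[ℝ] V →ₗ[ℝ] ℝ)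
    (hBsymm : ∀ v w : V, B v w = B w v)
    (hBnd : ∀ v : V, (∀ w : V, B v w = 0) → v = 0)
    (hBindef : ∃ v w : V, 0 < B v v ∧ B w w < 0)
    (F : V →ₗ[ℝ] V →ₗ[ℝ] ℝ)
    (hFsymm : ∀ v w : V, F v w = F w v)
    (hF0 : ∀ v : V, v ≠ 0 → B v v = 0 → 0 < F v v) :
    sSup {x : ℝ | ∃ u : V, B u u < 0 ∧ x = F u u / B u u} <
      sInf {x : ℝ | ∃ v : V, 0 < B v v ∧ x = F v v / B v v} ∧
    ∀ r : ℝ,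
      sSup {x : ℝ | ∃ u : V, B u u < 0 ∧ x = F u u / B u u} < r →
      r < sInf {x : ℝ | ∃ v : V, 0 < B v v ∧ x = F v v / B v v} →
      ∀ v : V, v ≠ 0 → r * B v v < F v v :=
  stmt_1_general B hBindef F hF0
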